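/- Shuffle decomposition of products of simplex integrals: let E, F, G be complex Banach spaces, B : E × F → G a continuous bilinear map, p, q ≥ 1, F₀ : ℝ^p → E and G₀ : ℝ^q → F continuous, and s ≤ t. Then B(I^p_{s,t}(F₀), I^q_{s,t}(G₀)) = Σ_{η ∈ Sh(p,q)} I^{p+q}_{s,t}((w_1,…,w_{p+q}) ↦ B(F₀(w_{η(1)},…,w_{η(p)}), G₀(w_{η(p+1)},…,w_{η(p+q)}))). -/

import Mathlib

/-- `η ∈ S_N` is an `(a, N-a)`-shuffle: it is strictly increasing on the first `a`
positions and on the remaining positions (zero-based positions). -/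
def IsShuffle {N : ℕ} (a : ℕ) (η : Equiv.Perm (Fin N)) : Prop :=
  ∀ i j : Fin N, i < j → ((j : ℕ) < a ∨ a ≤ (i : ℕ)) → η i < η j

instance {N a : ℕ} : DecidablePred (fun η : Equiv.Perm (Fin N) => IsShuffle a η) :=
  fun η => by unfold IsShuffle; infer_instance

/-- The finite set `Sh(a, N-a)` of `(a, N-a)`-shuffles inside `S_N`. -/
def shuffles (N a : ℕ) : Finset (Equiv.Perm (Fin N)) :=
  Finset.univ.filter (fun η => IsShuffle a η)

/-- The iterated integral `I^n_{s,t}(g)` over the simplex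
`Δ^n_{s,t} = {s < t_n < ⋯ < t_1 < t}`, as a nested Bochner integral. -/
noncomputable def simplexIntegral {E : Type*} [NormedAddCommGroup E] [NormedSpace ℝ E] :
    (n : ℕ) → ℝ → ℝ → ((Fin n → ℝ) → E) → E
  | 0, _, _, g => g Fin.elim0
  | n + 1, s, t, g => ∫ r in s..t, simplexIntegral n s r (fun ts => g (Fin.cons r ts))

/-!
Both sides vanish at `t = s`, so it suffices to compare their derivatives in `t`. By the product
rule the left side has derivative `B(I^{p-1}_{s,t}(F₀(t,·)), I^q_{s,t}(G₀)) +
B(I^p_{s,t}(F₀), I^{q-1}_{s,t}(G₀(t,·)))`, while differentiating a simplex integral freezes its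
largest variable `w₁` at `t`. In a `(p,q)`-shuffle the largest variable is the first argument of
either `F₀` or `G₀`, and deleting it identifies `Sh(p,q)` with `Sh(p-1,q) ⊔ Sh(p,q-1)`, so the
two derivatives agree by induction on `p + q`.
-/

open Equiv Finset

section Shuffles

variable {n : ℕ}

def extendPerm (k : Fin (n + 1)) (σ : Perm (Fin n)) : Perm (Fin (n + 1)) :=
  (finSuccEquiv' k).trans (σ.optionCongr.trans (finSuccEquiv' 0).symm)

def shrinkPerm (k : Fin (n + 1)) (η : Perm (Fin (n + 1))) : Perm (Fin n) :=
  removeNone ((finSuccEquiv' k).symm.trans (η.trans (finSuccEquiv' 0)))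

@[simp] lemma extendPerm_apply_self (k : Fin (n + 1)) (σ : Perm (Fin n)) :
    extendPerm k σ k = 0 := by
  simp [extendPerm, finSuccEquiv'_at]

@[simp] lemma extendPerm_apply_succAbove (k : Fin (n + 1)) (σ : Perm (Fin n)) (x : Fin n) :
    extendPerm k σ (k.succAbove x) = (σ x).succ := by
  simp [extendPerm, finSuccEquiv'_succAbove, finSuccEquiv'_symm_some]

@[simp] lemma extendPerm_zero_apply_succ (σ : Perm (Fin n)) (x : Fin n) :
    extendPerm 0 σ x.succ = (σ x).succ := by
  rw [← Fin.zero_succAbove, extendPerm_apply_succAbove]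

lemma shrinkPerm_extendPerm (k : Fin (n + 1)) (σ : Perm (Fin n)) :
    shrinkPerm k (extendPerm k σ) = σ := by
  simp [shrinkPerm, extendPerm, Equiv.trans_assoc, ← Equiv.trans_assoc (finSuccEquiv' k).symm]

lemma extendPerm_shrinkPerm {k : Fin (n + 1)} {η : Perm (Fin (n + 1))} (hk : η k = 0) :
    extendPerm k (shrinkPerm k η) = η := by
  ext y
  simp [shrinkPerm, extendPerm, hk, finSuccEquiv'_at]

lemma Fin.val_succAbove (k : Fin (n + 1)) (x : Fin n) :
    (k.succAbove x : ℕ) = if (x : ℕ) < k then (x : ℕ) else (x : ℕ) + 1 := by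
  unfold Fin.succAbove
  split_ifs <;> simp_all [Fin.lt_def]

lemma mem_shuffles {N a : ℕ} {η : Perm (Fin N)} : η ∈ shuffles N a ↔ IsShuffle a η := by
  simp [shuffles]

lemma shuffles_eq_singleton_one {N a : ℕ} (ha : a = 0 ∨ N ≤ a) : shuffles N a = {1} := by
  ext η
  rw [mem_shuffles, mem_singleton]
  constructor
  · intro hη
    exact Equiv.ext (congrFun (StrictMono.eq_id fun i j hij => hη i j hij (by omega)))
  · rintro rfl i j hij -
    exact hij

/-- The new position `k` is the first one of the first block (`k = 0`, which grows by one) or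
of the second block (`k = a`). -/
lemma isShuffle_extendPerm_iff {a b : ℕ} {k : Fin (n + 1)}
    (hk : (k : ℕ) = 0 ∧ b = a + 1 ∨ (k : ℕ) = a ∧ b = a) {σ : Perm (Fin n)} :
    IsShuffle b (extendPerm k σ) ↔ IsShuffle a σ := by
  have hval := Fin.val_succAbove k
  constructor
  · intro h x y hxy hxy'
    have := h (k.succAbove x) (k.succAbove y) (Fin.succAbove_lt_succAbove_iff.mpr hxy)
      (by rw [hval, hval]; split_ifs <;> omega)
    simpa using this
  · intro h i j hij hij'
    obtain rfl | hi := eq_or_ne i k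
    · rw [extendPerm_apply_self, Fin.pos_iff_ne_zero, ← extendPerm_apply_self i σ]
      exact (extendPerm i σ).injective.ne hij.ne'
    obtain ⟨x, rfl⟩ := Fin.exists_succAbove_eq hi
    obtain rfl | hj := eq_or_ne j k
    · rw [Fin.lt_def, hval] at hij
      rw [hval] at hij'
      split_ifs at hij hij' <;> omega
    obtain ⟨y, rfl⟩ := Fin.exists_succAbove_eq hj
    rw [extendPerm_apply_succAbove, extendPerm_apply_succAbove, Fin.succ_lt_succ_iff]
    refine h x y (Fin.succAbove_lt_succAbove_iff.mp hij) ?_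
    rw [hval, hval] at hij'
    split_ifs at hij' <;> omega

lemma IsShuffle.symm_apply_zero {a : ℕ} (ha : a < n + 1) {η : Perm (Fin (n + 1))}
    (hη : IsShuffle a η) : η.symm 0 = 0 ∨ η.symm 0 = ⟨a, ha⟩ := by
  by_contra! hne
  have hk : η (η.symm 0) = 0 := η.apply_symm_apply 0
  rcases lt_or_ge (η.symm 0 : ℕ) a with hlt | hge
  · have := hη 0 _ (Fin.pos_iff_ne_zero.mpr hne.1) (Or.inl hlt)
    exact Fin.not_lt_zero _ (hk ▸ this)
  · have := hη ⟨a, ha⟩ _ (lt_of_le_of_ne hge (Ne.symm hne.2)) (Or.inr le_rfl)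
    exact Fin.not_lt_zero _ (hk ▸ this)

lemma sum_shuffles_filter_apply_eq_zero {M : Type*} [AddCommMonoid M] {a b : ℕ}
    {k : Fin (n + 1)} (hk : (k : ℕ) = 0 ∧ b = a + 1 ∨ (k : ℕ) = a ∧ b = a)
    (f : Perm (Fin (n + 1)) → M) :
    ∑ η ∈ (shuffles (n + 1) b).filter (· k = 0), f η =
      ∑ σ ∈ shuffles n a, f (extendPerm k σ) := by
  refine sum_nbij' (shrinkPerm k) (extendPerm k) ?_ ?_ ?_ ?_ ?_
  · intro η hη
    simp only [mem_filter, mem_shuffles] at hη ⊢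
    rw [← isShuffle_extendPerm_iff hk, extendPerm_shrinkPerm hη.2]
    exact hη.1
  · intro σ hσ
    simp only [mem_filter, mem_shuffles] at hσ ⊢
    exact ⟨(isShuffle_extendPerm_iff hk).mpr hσ, extendPerm_apply_self k σ⟩
  · intro η hη
    exact extendPerm_shrinkPerm (mem_filter.mp hη).2
  · intro σ _
    exact shrinkPerm_extendPerm k σ
  · intro η hη
    rw [extendPerm_shrinkPerm (mem_filter.mp hη).2]

lemma sum_shuffles_succ_succ {M : Type*} [AddCommMonoid M] {a : ℕ} (ha : a < n)
    (f : Perm (Fin (n + 1)) → M) :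
    ∑ η ∈ shuffles (n + 1) (a + 1), f η =
      ∑ σ ∈ shuffles n a, f (extendPerm 0 σ) +
        ∑ σ ∈ shuffles n (a + 1), f (extendPerm ⟨a + 1, by omega⟩ σ) := by
  have hsplit : (shuffles (n + 1) (a + 1)).filter (fun η => ¬ η 0 = 0) =
      (shuffles (n + 1) (a + 1)).filter (· ⟨a + 1, by omega⟩ = 0) := by
    refine filter_congr fun η hη => ?_
    rw [← η.eq_symm_apply, ← η.eq_symm_apply]
    have := (mem_shuffles.mp hη).symm_apply_zero (by omega : a + 1 < n + 1)
    constructor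
    · exact fun h => (this.resolve_left (Ne.symm h)).symm
    · rintro h h'
      rw [← h'] at h
      simp [Fin.ext_iff] at h
  rw [← sum_filter_add_sum_filter_not _ (fun η => η 0 = 0), hsplit,
    sum_shuffles_filter_apply_eq_zero (Or.inl ⟨rfl, rfl⟩),
    sum_shuffles_filter_apply_eq_zero (Or.inr ⟨rfl, rfl⟩)]

end Shuffles

theorem eq_of_hasDerivAt_eq {𝕜 G : Type*} [NontriviallyNormedField 𝕜] [IsRCLikeNormedField 𝕜]
    [NormedAddCommGroup G] [NormedSpace 𝕜 G] {f g f' : 𝕜 → G}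
    (hf : ∀ x, HasDerivAt f (f' x) x) (hg : ∀ x, HasDerivAt g (f' x) x) (a : 𝕜)
    (ha : f a = g a) : f = g :=
  eq_of_fderiv_eq (fun x => (hf x).differentiableAt) (fun x => (hg x).differentiableAt)
    (fun x => by rw [(hf x).hasFDerivAt.fderiv, (hg x).hasFDerivAt.fderiv]) a ha

section SimplexIntegral

variable {E F : Type*} [NormedAddCommGroup E] [NormedSpace ℝ E] [NormedAddCommGroup F]
  [NormedSpace ℝ F]

@[simp] theorem simplexIntegral_zero (s t : ℝ) (g : (Fin 0 → ℝ) → E) :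
    simplexIntegral 0 s t g = g Fin.elim0 :=
  rfl

theorem simplexIntegral_succ_self (n : ℕ) (s : ℝ) (g : (Fin (n + 1) → ℝ) → E) :
    simplexIntegral (n + 1) s s g = 0 :=
  intervalIntegral.integral_same

theorem continuous_parametric_simplexIntegral {X : Type*} [TopologicalSpace X] {n : ℕ}
    {g : X → (Fin n → ℝ) → E} (hg : Continuous (Function.uncurry g)) (s : ℝ) :
    Continuous fun p : X × ℝ => simplexIntegral n s p.2 (g p.1) := by
  induction n generalizing X with
  | zero => exact hg.comp (continuous_fst.prodMk continuous_const)
  | succ n ih =>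
    have hinner := ih (g := fun (x : X × ℝ) ts => g x.1 (Fin.cons x.2 ts)) (hg.comp
      (by fun_prop : Continuous fun p : (X × ℝ) × (Fin n → ℝ) =>
        (p.1.1, (Fin.cons p.1.2 p.2 : Fin (n + 1) → ℝ))))
    exact intervalIntegral.continuous_parametric_primitive_of_continuous
      (f := fun x r => simplexIntegral n s r fun ts => g x (Fin.cons r ts))
      (hinner.comp (by fun_prop : Continuous fun p : X × ℝ => (p, p.2)))

theorem continuous_simplexIntegral_cons {n : ℕ} {g : (Fin (n + 1) → ℝ) → E} (hg : Continuous g)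
    (s : ℝ) : Continuous fun r => simplexIntegral n s r (fun ts => g (Fin.cons r ts)) :=
  (continuous_parametric_simplexIntegral (g := fun r ts => g (Fin.cons r ts))
    (by fun_prop) s).comp (by fun_prop : Continuous fun r : ℝ => (r, r))

variable [CompleteSpace E]

theorem hasDerivAt_simplexIntegral {n : ℕ} {g : (Fin (n + 1) → ℝ) → E} (hg : Continuous g)
    (s t : ℝ) :
    HasDerivAt (fun u => simplexIntegral (n + 1) s u g)
      (simplexIntegral n s t (fun ts => g (Fin.cons t ts))) t :=
  ((continuous_simplexIntegral_cons hg s).integral_hasStrictDerivAt s t).hasDerivAt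

theorem ContinuousLinearMap.map_simplexIntegral [CompleteSpace F] (L : E →L[ℝ] F) {n : ℕ}
    {g : (Fin n → ℝ) → E} (hg : Continuous g) (s t : ℝ) :
    L (simplexIntegral n s t g) = simplexIntegral n s t (fun w => L (g w)) := by
  induction n generalizing t with
  | zero => rfl
  | succ n ih =>
    simp only [simplexIntegral]
    rw [← L.intervalIntegral_comp_comm
      ((continuous_simplexIntegral_cons hg s).intervalIntegrable s t)]
    congr with r
    exact ih (hg.comp (by fun_prop)) r

end SimplexIntegral

section ShuffleProduct

variable {E F G : Type*} [NormedAddCommGroup E] [NormedSpace ℝ E] [NormedAddCommGroup F]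
  [NormedSpace ℝ F] [NormedAddCommGroup G] [NormedSpace ℝ G]

/-- `N` is kept apart from `p + q` (through `h`) so that the induction can vary `p` and `q`
without transporting along `Fin (p + q)`. -/
noncomputable def shuffleIntegrand (B : E →L[ℝ] F →L[ℝ] G) {p q N : ℕ} (F₀ : (Fin p → ℝ) → E)
    (G₀ : (Fin q → ℝ) → F) (h : p + q = N) (η : Perm (Fin N)) (w : Fin N → ℝ) : G :=
  B (F₀ fun i => w (η (Fin.cast h (Fin.castAdd q i))))
    (G₀ fun j => w (η (Fin.cast h (Fin.natAdd p j))))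

variable (B : E →L[ℝ] F →L[ℝ] G) {p q n : ℕ} {F₀ : (Fin p → ℝ) → E} {G₀ : (Fin q → ℝ) → F}

theorem continuous_shuffleIntegrand (hF₀ : Continuous F₀) (hG₀ : Continuous G₀) (h : p + q = n)
    (η : Perm (Fin n)) : Continuous (shuffleIntegrand B F₀ G₀ h η) := by
  unfold shuffleIntegrand
  fun_prop

theorem shuffleIntegrand_extendPerm_zero_cons {F₀ : (Fin (p + 1) → ℝ) → E}
    (h : p + 1 + q = n + 1) (σ : Perm (Fin n)) (u : ℝ) (w : Fin n → ℝ) :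
    shuffleIntegrand B F₀ G₀ h (extendPerm 0 σ) (Fin.cons u w) =
      shuffleIntegrand B (fun x => F₀ (Fin.cons u x)) G₀ (by omega) σ w := by
  have h' : p + q = n := by omega
  have hzero : Fin.cast h (Fin.castAdd q (0 : Fin (p + 1))) = 0 := Fin.ext (by simp)
  have hleft (i : Fin p) :
      Fin.cast h (Fin.castAdd q i.succ) = (Fin.cast h' (Fin.castAdd q i)).succ :=
    Fin.ext (by simp)
  have hright (j : Fin q) :
      Fin.cast h (Fin.natAdd (p + 1) j) = (Fin.cast h' (Fin.natAdd p j)).succ :=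
    Fin.ext (by simp; omega)
  unfold shuffleIntegrand
  congr 1
  · congr 2
    funext i
    refine Fin.cases ?_ (fun i => ?_) i
    · simp [hzero]
    · simp only [hleft, Fin.cons_succ, extendPerm_zero_apply_succ]
  · congr 1
    funext j
    simp only [hright, extendPerm_zero_apply_succ, Fin.cons_succ]

theorem shuffleIntegrand_extendPerm_cons {G₀ : (Fin (q + 1) → ℝ) → F} (hp : p < n + 1)
    (h : p + (q + 1) = n + 1) (σ : Perm (Fin n)) (u : ℝ) (w : Fin n → ℝ) :
    shuffleIntegrand B F₀ G₀ h (extendPerm ⟨p, hp⟩ σ) (Fin.cons u w) =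
      shuffleIntegrand B F₀ (fun y => G₀ (Fin.cons u y)) (by omega) σ w := by
  have h' : p + q = n := by omega
  have hval := Fin.val_succAbove (⟨p, hp⟩ : Fin (n + 1))
  have hzero : Fin.cast h (Fin.natAdd p (0 : Fin (q + 1))) = ⟨p, hp⟩ := Fin.ext (by simp)
  have hleft (i : Fin p) : Fin.cast h (Fin.castAdd (q + 1) i) =
      Fin.succAbove ⟨p, hp⟩ (Fin.cast h' (Fin.castAdd q i)) := by
    ext; rw [hval]; simp
  have hright (j : Fin q) : Fin.cast h (Fin.natAdd p j.succ) =
      Fin.succAbove ⟨p, hp⟩ (Fin.cast h' (Fin.natAdd p j)) := by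
    ext; rw [hval]; simp; omega
  unfold shuffleIntegrand
  congr 1
  · congr 2
    funext i
    simp only [hleft, Fin.cons_succ, extendPerm_apply_succAbove]
  · congr 1
    funext j
    refine Fin.cases ?_ (fun j => ?_) j
    · simp [hzero]
    · simp only [hright, Fin.cons_succ, extendPerm_apply_succAbove]

theorem simplexIntegral_bilinear_eq_sum_shuffles_zero_left [CompleteSpace F] [CompleteSpace G] {N : ℕ}
    (F₀ : (Fin 0 → ℝ) → E) (hG₀ : Continuous G₀) (h : 0 + q = N) (s t : ℝ) :
    B (simplexIntegral 0 s t F₀) (simplexIntegral q s t G₀) =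
      ∑ η ∈ shuffles N 0, simplexIntegral N s t (shuffleIntegrand B F₀ G₀ h η) := by
  obtain rfl : q = N := by omega
  rw [shuffles_eq_singleton_one (Or.inl rfl), sum_singleton, simplexIntegral_zero,
    (B (F₀ Fin.elim0)).map_simplexIntegral hG₀]
  congr with w
  simp only [shuffleIntegrand, Perm.one_apply]
  congr! 2
  · exact congrArg F₀ (Subsingleton.elim _ _)
  · ext j; simp

theorem simplexIntegral_bilinear_eq_sum_shuffles_zero_right [CompleteSpace E] [CompleteSpace G] {N : ℕ}
    (hF₀ : Continuous F₀) (G₀ : (Fin 0 → ℝ) → F) (h : p + 0 = N) (s t : ℝ) :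
    B (simplexIntegral p s t F₀) (simplexIntegral 0 s t G₀) =
      ∑ η ∈ shuffles N p, simplexIntegral N s t (shuffleIntegrand B F₀ G₀ h η) := by
  obtain rfl : p = N := by omega
  rw [shuffles_eq_singleton_one (Or.inr le_rfl), sum_singleton, simplexIntegral_zero,
    ← B.flip_apply, (B.flip (G₀ Fin.elim0)).map_simplexIntegral hF₀]
  congr with w
  simp only [shuffleIntegrand, Perm.one_apply, B.flip_apply]
  congr! 2

theorem simplexIntegral_bilinear_eq_sum_shuffles [CompleteSpace E] [CompleteSpace F]
    [CompleteSpace G] {N : ℕ} (h : p + q = N) (hF₀ : Continuous F₀) (hG₀ : Continuous G₀)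
    (s t : ℝ) :
    B (simplexIntegral p s t F₀) (simplexIntegral q s t G₀) =
      ∑ η ∈ shuffles N p, simplexIntegral N s t (shuffleIntegrand B F₀ G₀ h η) := by
  induction N generalizing p q F₀ G₀ t with
  | zero =>
    obtain rfl : p = 0 := by omega
    exact simplexIntegral_bilinear_eq_sum_shuffles_zero_left B F₀ hG₀ h s t
  | succ n ih =>
    rcases p with _ | p
    · exact simplexIntegral_bilinear_eq_sum_shuffles_zero_left B F₀ hG₀ h s t
    rcases q with _ | q
    · exact simplexIntegral_bilinear_eq_sum_shuffles_zero_right B hF₀ G₀ h s t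
    set D : ℝ → G := fun u =>
      B (simplexIntegral p s u fun x => F₀ (Fin.cons u x)) (simplexIntegral (q + 1) s u G₀) +
        B (simplexIntegral (p + 1) s u F₀) (simplexIntegral q s u fun y => G₀ (Fin.cons u y))
    have hL (u : ℝ) : HasDerivAt
        (fun t => B (simplexIntegral (p + 1) s t F₀) (simplexIntegral (q + 1) s t G₀)) (D u) u :=
      (B.hasFDerivAt.comp_hasDerivAt u (hasDerivAt_simplexIntegral hF₀ s u)).clm_apply
        (hasDerivAt_simplexIntegral hG₀ s u)
    have hR (u : ℝ) : HasDerivAt (fun t => ∑ η ∈ shuffles (n + 1) (p + 1),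
        simplexIntegral (n + 1) s t (shuffleIntegrand B F₀ G₀ h η)) (D u) u := by
      convert HasDerivAt.fun_sum fun η _ =>
        hasDerivAt_simplexIntegral (continuous_shuffleIntegrand B hF₀ hG₀ h η) s u using 1
      dsimp only [D]
      rw [sum_shuffles_succ_succ (by omega), ih (by omega) (by fun_prop) hG₀,
        ih (by omega) hF₀ (by fun_prop)]
      simp only [shuffleIntegrand_extendPerm_zero_cons, shuffleIntegrand_extendPerm_cons]
    refine congrFun (eq_of_hasDerivAt_eq hL hR s ?_) t
    simp [simplexIntegral_succ_self]

end ShuffleProduct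

theorem simplexIntegral_shuffle_product_general {E F G : Type*}
    [NormedAddCommGroup E] [NormedSpace ℂ E] [CompleteSpace E]
    [NormedAddCommGroup F] [NormedSpace ℂ F] [CompleteSpace F]
    [NormedAddCommGroup G] [NormedSpace ℂ G] [CompleteSpace G]
    (B : E →L[ℂ] F →L[ℂ] G) (p q : ℕ)
    (F₀ : (Fin p → ℝ) → E) (hF₀ : Continuous F₀)
    (G₀ : (Fin q → ℝ) → F) (hG₀ : Continuous G₀)
    (s t : ℝ) :
    B (simplexIntegral p s t F₀) (simplexIntegral q s t G₀) =
      ∑ η ∈ shuffles (p + q) p,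
        simplexIntegral (p + q) s t (fun w =>
          B (F₀ fun i => w (η (Fin.castAdd q i)))
            (G₀ fun j => w (η (Fin.natAdd p j)))) :=
  simplexIntegral_bilinear_eq_sum_shuffles
    ((ContinuousLinearMap.restrictScalarsL ℂ F G ℝ ℝ).comp (B.restrictScalars ℝ)) rfl hF₀ hG₀ s t

/-- shuffle decomposition of products of simplex integrals: for complex
Banach spaces `E, F, G`, a continuous bilinear `B : E × F → G`, `p, q ≥ 1`, continuous
`F₀ : ℝ^p → E`, `G₀ : ℝ^q → F` and `s ≤ t`,
`B(I^p_{s,t}(F₀), I^q_{s,t}(G₀)) = Σ_{η ∈ Sh(p,q)} I^{p+q}_{s,t}((w_1,…,w_{p+q}) ↦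
  B(F₀(w_{η(1)},…,w_{η(p)}), G₀(w_{η(p+1)},…,w_{η(p+q)})))`. -/
theorem simplexIntegral_shuffle_product {E F G : Type*}
    [NormedAddCommGroup E] [NormedSpace ℂ E] [CompleteSpace E]
    [NormedAddCommGroup F] [NormedSpace ℂ F] [CompleteSpace F]
    [NormedAddCommGroup G] [NormedSpace ℂ G] [CompleteSpace G]
    (B : E →L[ℂ] F →L[ℂ] G) (p q : ℕ) (hp : 1 ≤ p) (hq : 1 ≤ q)
    (F₀ : (Fin p → ℝ) → E) (hF₀ : Continuous F₀)
    (G₀ : (Fin q → ℝ) → F) (hG₀ : Continuous G₀)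
    (s t : ℝ) (hst : s ≤ t) :
    B (simplexIntegral p s t F₀) (simplexIntegral q s t G₀) =
      ∑ η ∈ shuffles (p + q) p,
        simplexIntegral (p + q) s t (fun w =>
          B (F₀ fun i => w (η (Fin.castAdd q i)))
            (G₀ fun j => w (η (Fin.natAdd p j)))) :=
  simplexIntegral_shuffle_product_general B p q F₀ hF₀ G₀ hG₀ s t
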